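/- arXiv:2601.11221 — 7 statements merged into one kernel-verified Lean document; each statement's English description precedes it below -/
import Mathlib

section
/- Let C, A, B, D be partial orders each having a greatest element ⊤, and let f : C → A, g : C → B, u : A → D, v : B → D be monotone maps such that f ⊤ = ⊤ and v (g x) ≤ u (f x) for all x ∈ C. Suppose the lax square has interpolation: for all a ∈ A and b ∈ B with v b ≤ u a there exists c ∈ C with b ≤ g c and f c ≤ a. If g is t-conservative, then u is t-conservative. -/
theorem stmt_0_general {C A B D : Type*} [PartialOrder C] [OrderTop C]
    [PartialOrder A] [OrderTop A] [PartialOrder B] [OrderTop B]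
    [PartialOrder D] [OrderTop D]
    (f : C →o A) (g : C →o B) (u : A →o D) (v : B →o D)
    (hf : f ⊤ = ⊤)
    (interp : ∀ (a : A) (b : B), v b ≤ u a → ∃ c : C, b ≤ g c ∧ f c ≤ a)
    (hg : ∀ x : C, g x = ⊤ → x = ⊤) :
    ∀ a : A, u a = ⊤ → a = ⊤ := by
  intro a ha
  obtain ⟨c, hgc, hfc⟩ := interp a ⊤ (ha ▸ le_top)
  rw [hg c (top_unique hgc), hf] at hfc
  exact top_unique hfc

/-- In a lax square of monotone maps between partial orders with top,
with `f ⊤ = ⊤`, if the square has interpolation and `g` is t-conservative, then `u` is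
t-conservative. -/
theorem stmt_0 {C A B D : Type*} [PartialOrder C] [OrderTop C]
    [PartialOrder A] [OrderTop A] [PartialOrder B] [OrderTop B]
    [PartialOrder D] [OrderTop D]
    (f : C →o A) (g : C →o B) (u : A →o D) (v : B →o D)
    (hf : f ⊤ = ⊤)
    (lax : ∀ x : C, v (g x) ≤ u (f x))
    (interp : ∀ (a : A) (b : B), v b ≤ u a → ∃ c : C, b ≤ g c ∧ f c ≤ a)
    (hg : ∀ x : C, g x = ⊤ → x = ⊤) :
    ∀ a : A, u a = ⊤ → a = ⊤ :=
  stmt_0_general f g u v hf interp hg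
end

section
/- Let C and E be categories with finite limits, let a be an object of C, and let F : C ⥤ E be a functor preserving finite limits. Then the following are equivalent: (i) there exists a morphism ⊤_E ⟶ F.obj a from the terminal object of E (a global section of F a); (ii) there exists a functor G : Over a ⥤ E preserving finite limits together with a natural isomorphism Over.star a ⋙ G ≅ F. -/
/-!
A global section `s : ⊤ ⟶ F a` lets one pull back along it: `G (x ⟶ a) := ⊤ ×_{F a} F x` is a
composite of lex functors (`Over.post F`, pullback along `s`, and `Over (⊤_ E) ≌ E`). Since `F`
preserves binary products, `G (a ⨯ b ⟶ a) ≅ ⊤ ×_{F a} (F a ⨯ F b) ≅ F b`. Conversely, the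
diagonal `a ⟶ a ⨯ a` is a global section of `Over.star a` at `a` in `Over a`, and any lex `G`
carries it to a global section of `G (Over.star a a) ≅ F a`.
-/

open CategoryTheory CategoryTheory.Limits

noncomputable section

namespace CategoryTheory.Over

variable {C : Type*} [Category C] [HasBinaryProducts C]

lemma star_obj_hom_eq_fst (X Y : C) : ((star X).obj Y).hom = (prod.fst : X ⨯ Y ⟶ X) :=
  (star_obj_hom X Y).trans (Limits.prod.lift_fst _ _)

def starCompPostIso {D : Type*} [Category D] [HasBinaryProducts D] (X : C) (F : C ⥤ D)
    [PreservesLimitsOfShape (Discrete WalkingPair) F] :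
    star X ⋙ post F ≅ F ⋙ star (F.obj X) :=
  NatIso.ofComponents (fun Y => isoMk (PreservesLimitPair.iso F X Y) (by
      change prodComparison F X Y ≫ ((star (F.obj X)).obj (F.obj Y)).hom =
        F.map ((star X).obj Y).hom
      rw [star_obj_hom_eq_fst, star_obj_hom_eq_fst, prodComparison_fst]; rfl))
    (fun f => by
      ext
      exact (prodComparison_natural F (𝟙 X) f).trans (by rw [F.map_id]; rfl))

def starCompForgetIsoOfIsTerminal {T : C} (hT : IsTerminal T) : star T ⋙ forget T ≅ 𝟭 C :=
  Functor.isoWhiskerRight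
      ((forgetAdjStar T).rightAdjointUniq (equivalenceOfIsTerminal hT).toAdjunction) (forget T) ≪≫
    (equivalenceOfIsTerminal hT).counitIso

def diagonalToStar (X : C) : mk (𝟙 X) ⟶ (star X).obj X :=
  (forgetAdjStar X).homEquiv (mk (𝟙 X)) X (𝟙 X)

end CategoryTheory.Over

open Over

section

variable {C : Type*} [Category C] {E : Type*} [Category E] [HasTerminal E]

def pullbackAlongSection [HasPullbacks E] {a : C} (F : C ⥤ E) (s : ⊤_ E ⟶ F.obj a) :
    Over a ⥤ E :=
  post F ⋙ pullback s ⋙ forget (⊤_ E)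

instance [HasPullbacks E] {a : C} (F : C ⥤ E) [PreservesFiniteLimits F] (s : ⊤_ E ⟶ F.obj a) :
    PreservesFiniteLimits (pullbackAlongSection F s) := by
  have : (forget (⊤_ E)).IsEquivalence :=
    (equivalenceOfIsTerminal terminalIsTerminal).isEquivalence_functor
  unfold pullbackAlongSection
  infer_instance

def starCompPullbackAlongSectionIso [HasBinaryProducts C] [HasPullbacks E] [HasBinaryProducts E]
    {a : C} (F : C ⥤ E) [PreservesLimitsOfShape (Discrete WalkingPair) F]
    (s : ⊤_ E ⟶ F.obj a) : star a ⋙ pullbackAlongSection F s ≅ F :=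
  (Functor.associator _ _ _).symm ≪≫
    Functor.isoWhiskerRight (starCompPostIso a F) _ ≪≫
    Functor.associator _ _ _ ≪≫
    Functor.isoWhiskerLeft F ((Functor.associator _ _ _).symm ≪≫
      Functor.isoWhiskerRight (starPullbackIsoStar s) _ ≪≫
      starCompForgetIsoOfIsTerminal terminalIsTerminal) ≪≫
    F.rightUnitor

def globalSectionOfStarCompIso [HasBinaryProducts C] {a : C} {F : C ⥤ E} (G : Over a ⥤ E)
    [PreservesLimit (Functor.empty (Over a)) G] (e : star a ⋙ G ≅ F) : ⊤_ E ⟶ F.obj a :=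
  (mkIdTerminal.isTerminalObj G).from (⊤_ E) ≫ G.map (diagonalToStar a) ≫ e.hom.app a

end

/-- For lex categories `C`, `E`, an object `a : C` and a finite-limit
preserving functor `F : C ⥤ E`, the following are equivalent: `F.obj a` has a global
section, and `F` factors (up to iso) through the slicing functor `Over.star a : C ⥤ Over a`
via a finite-limit preserving functor. -/
theorem stmt_2 {C : Type*} [Category C] {E : Type*} [Category E]
    [HasFiniteLimits C] [HasFiniteLimits E]
    (a : C) (F : C ⥤ E) [PreservesFiniteLimits F] :
    Nonempty (⊤_ E ⟶ F.obj a) ↔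
      ∃ (G : Over a ⥤ E) (_ : PreservesFiniteLimits G),
        Nonempty (Over.star a ⋙ G ≅ F) := by
  constructor
  · rintro ⟨s⟩
    exact ⟨pullbackAlongSection F s, inferInstance, ⟨starCompPullbackAlongSectionIso F s⟩⟩
  · rintro ⟨G, _, ⟨e⟩⟩
    exact ⟨globalSectionOfStarCompIso G e⟩
end
end

section
/- Let C and E be categories with finite limits, let a be an object of C, and let G, G' : Over a ⥤ E be functors preserving finite limits. Write T = Over.mk (𝟙 a) for the terminal object of Over a, and δ : T ⟶ (Over.star a).obj a for the morphism in Over a whose underlying morphism is the diagonal a ⟶ a ⨯ a. Suppose ψ : Over.star a ⋙ G ≅ Over.star a ⋙ G' is a natural isomorphism such that G.map δ ≫ ψ.app a = ι ≫ G'.map δ, where ι : G.obj T ⟶ G'.obj T is the unique isomorphism between these two terminal objects of E. Then there exists a natural isomorphism Φ : G ≅ G' such that Φ.app ((Over.star a).obj b) = ψ.app b for every object b of C. -/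
/-! Every `X : Over a` is the equalizer of `(Over.star a).map X.hom` and the map
`(Over.star a).obj X.left ⟶ Over.mk (𝟙 a) ⟶ (Over.star a).obj a` through the diagonal, via the
unit `X ⟶ (Over.star a).obj X.left` of `Over.forget a ⊣ Over.star a`. Lex functors preserve these
equalizers, and `ψ` is compatible with both legs (with the second one by the hypothesis on the
diagonal), so it induces isomorphisms `G.obj X ≅ G'.obj X`, natural in `X`. On an object
`(Over.star a).obj b` the unit is split by `(Over.star a).map prod.snd` (a triangle identity),
which forces the induced component to be `ψ.hom.app b`. -/

open CategoryTheory CategoryTheory.Limits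

noncomputable section

variable {C : Type*} [Category C] [HasFiniteLimits C]

/-- The morphism in `Over a` from the terminal object `Over.mk (𝟙 a)` to
`(Over.star a).obj a` whose underlying morphism is the diagonal `a ⟶ a ⨯ a`. -/
def sliceDiag (a : C) : Over.mk (𝟙 a) ⟶ (Over.star a).obj a :=
  Over.homMk (prod.lift (𝟙 a) (𝟙 a)) (by simp; erw [prod.lift_fst, prod.lift_fst])

/-- The image of the terminal object of `Over a` under a finite-limit preserving functor is
terminal. -/
def terminalObjOfLex {E : Type*} [Category E] [HasFiniteLimits E]
    {a : C} (G : Over a ⥤ E) [PreservesFiniteLimits G] :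
    IsTerminal (G.obj (Over.mk (𝟙 a))) :=
  Over.mkIdTerminal.isTerminalObj G _

namespace CategoryTheory.Adjunction

variable {A D E : Type*} [Category A] [Category D] [Category E] {L : D ⥤ A} {S : A ⥤ D}
  (adj : L ⊣ S) {G G' : D ⥤ E} (ψ : S ⋙ G ≅ S ⋙ G')
  {Y : D} {u v : ∀ X : D, S.obj (L.obj X) ⟶ Y}
  (w : ∀ X, adj.unit.app X ≫ u X = adj.unit.app X ≫ v X)
  (hlim : ∀ X, IsLimit (Fork.ofι (adj.unit.app X) (w X)))
  [∀ X, PreservesLimit (parallelPair (u X) (v X)) G]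
  [∀ X, PreservesLimit (parallelPair (u X) (v X)) G']
  (β : G.obj Y ≅ G'.obj Y)
  (hu : ∀ X, G.map (u X) ≫ β.hom = ψ.hom.app (L.obj X) ≫ G'.map (u X))
  (hv : ∀ X, G.map (v X) ≫ β.hom = ψ.hom.app (L.obj X) ≫ G'.map (v X))

def extendIsoApp (X : D) : G.obj X ≅ G'.obj X :=
  IsLimit.conePointsIsoOfNatIso (isLimitForkMapOfIsLimit G (w X) (hlim X))
    (isLimitForkMapOfIsLimit G' (w X) (hlim X))
    (parallelPair.ext (ψ.app (L.obj X)) β (hu X) (hv X))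

lemma extendIsoApp_hom_comp_map_unit (X : D) :
    (extendIsoApp adj ψ w hlim β hu hv X).hom ≫ G'.map (adj.unit.app X) =
      G.map (adj.unit.app X) ≫ ψ.hom.app (L.obj X) :=
  IsLimit.conePointsIsoOfNatIso_hom_comp _ _ _ WalkingParallelPair.zero

def extendIso : G ≅ G' :=
  NatIso.ofComponents (extendIsoApp adj ψ w hlim β hu hv) fun {X X'} g => by
    have : Mono (G'.map (adj.unit.app X')) :=
      ⟨fun _ _ h => Fork.IsLimit.hom_ext (isLimitForkMapOfIsLimit G' (w X') (hlim X')) h⟩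
    rw [← cancel_mono (G'.map (adj.unit.app X')), Category.assoc, Category.assoc,
      extendIsoApp_hom_comp_map_unit, ← G'.map_comp, ← adj.unit_naturality, G'.map_comp,
      reassoc_of% extendIsoApp_hom_comp_map_unit, ← G.map_comp_assoc, ← adj.unit_naturality,
      G.map_comp_assoc]
    exact congrArg _ (ψ.hom.naturality (L.map g))

lemma extendIso_hom_app_obj (b : A) :
    (extendIso adj ψ w hlim β hu hv).hom.app (S.obj b) = ψ.hom.app b := by
  have triangle := congrArg G'.map (adj.right_triangle_components b)
  rw [G'.map_comp, G'.map_id] at triangle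
  calc (extendIso adj ψ w hlim β hu hv).hom.app (S.obj b)
      = (extendIsoApp adj ψ w hlim β hu hv (S.obj b)).hom ≫ G'.map (adj.unit.app (S.obj b)) ≫
          G'.map (S.map (adj.counit.app b)) := by rw [triangle, Category.comp_id]; rfl
    _ = G.map (adj.unit.app (S.obj b)) ≫ G.map (S.map (adj.counit.app b)) ≫ ψ.hom.app b := by
          rw [reassoc_of% extendIsoApp_hom_comp_map_unit]
          exact congrArg _ (ψ.hom.naturality (adj.counit.app b)).symm
    _ = ψ.hom.app b := by simp [← G.map_comp_assoc]

end CategoryTheory.Adjunction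

namespace CategoryTheory.Over

variable {a : C}

/- `((star a).obj b).left` is `a ⨯ b`, and `(forget a).obj X` is `X.left`, only up to unfolding,
so rewriting under `(star a).map X.hom` needs `erw`. -/

lemma forgetAdjStar_homEquiv_symm_sliceDiag :
    ((forgetAdjStar a).homEquiv _ _).symm (sliceDiag a) = 𝟙 a := by
  rw [Adjunction.homEquiv_counit, forgetAdjStar_counit_app]
  erw [prod.lift_snd]

lemma forgetAdjStar_homEquiv_symm_comp_sliceDiag {T : Over a} (f : T ⟶ Over.mk (𝟙 a)) :
    ((forgetAdjStar a).homEquiv _ _).symm (f ≫ sliceDiag a) = T.hom := by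
  rw [Adjunction.homEquiv_naturality_left_symm, forgetAdjStar_homEquiv_symm_sliceDiag]
  simpa using Over.w f

lemma forgetAdjStar_unit_app_comp_star_map_hom (X : Over a) :
    (forgetAdjStar a).unit.app X ≫ (star a).map X.hom =
      (forgetAdjStar a).unit.app X ≫ mkIdTerminal.from _ ≫ sliceDiag a := by
  apply ((forgetAdjStar a).homEquiv _ _).symm.injective
  erw [← Adjunction.homEquiv_unit, Equiv.symm_apply_apply]
  rw [← Category.assoc, forgetAdjStar_homEquiv_symm_comp_sliceDiag]
  rfl

def isLimitForkUnit (X : Over a) :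
    IsLimit (Fork.ofι _ (forgetAdjStar_unit_app_comp_star_map_hom X)) :=
  Fork.IsLimit.mk' _ fun s => by
    let t := ((forgetAdjStar a).homEquiv _ _).symm s.ι
    have ht : t ≫ X.hom = s.pt.hom := by
      have h := congrArg ((forgetAdjStar a).homEquiv _ _).symm s.condition
      erw [Adjunction.homEquiv_naturality_right_symm] at h
      rwa [← Category.assoc, forgetAdjStar_homEquiv_symm_comp_sliceDiag] at h
    refine ⟨Over.homMk t ht, ?_, fun {m} hm => ?_⟩
    · apply ((forgetAdjStar a).homEquiv _ _).symm.injective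
      erw [Adjunction.homEquiv_naturality_left_symm, Adjunction.homEquiv_symm_unit]
      exact Category.comp_id _
    · ext
      change m.left = ((forgetAdjStar a).homEquiv _ _).symm s.ι
      erw [← hm, Adjunction.homEquiv_naturality_left_symm, Adjunction.homEquiv_symm_unit]
      exact (Category.comp_id _).symm

end CategoryTheory.Over

/-- Uniqueness half of the cocomma universal property of the slice. Given
lex functors `G, G' : Over a ⥤ E` and a natural isomorphism
`ψ : Over.star a ⋙ G ≅ Over.star a ⋙ G'` compatible with the diagonal `δ` (via the unique
isomorphism `ι` between the images of the terminal object), there is a natural isomorphism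
`Φ : G ≅ G'` restricting to `ψ` along `Over.star a`. -/
theorem stmt_3 {E : Type*} [Category E] [HasFiniteLimits E]
    (a : C) (G G' : Over a ⥤ E) [PreservesFiniteLimits G] [PreservesFiniteLimits G']
    (ψ : Over.star a ⋙ G ≅ Over.star a ⋙ G')
    (hψ : G.map (sliceDiag a) ≫ ψ.hom.app a =
      ((terminalObjOfLex G).uniqueUpToIso (terminalObjOfLex G')).hom ≫
        G'.map (sliceDiag a)) :
    ∃ Φ : G ≅ G', ∀ b : C, Φ.hom.app ((Over.star a).obj b) = ψ.hom.app b := by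
  have hv (X : Over a) : G.map (Over.mkIdTerminal.from _ ≫ sliceDiag a) ≫ (ψ.app a).hom =
      ψ.hom.app X.left ≫ G'.map (Over.mkIdTerminal.from _ ≫ sliceDiag a) := by
    rw [G.map_comp, Category.assoc, Iso.app_hom, hψ, G'.map_comp, ← Category.assoc,
      ← Category.assoc]
    exact congrArg (· ≫ _) ((terminalObjOfLex G').hom_ext _ _)
  exact ⟨(Over.forgetAdjStar a).extendIso ψ Over.forgetAdjStar_unit_app_comp_star_map_hom
    Over.isLimitForkUnit (ψ.app a) (fun X => ψ.hom.naturality X.hom) hv,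
    Adjunction.extendIso_hom_app_obj _ _ _ _ _ _ _⟩

end
end

section
/- Let C and D be categories having initial objects, in both of which initial objects are strict (every morphism into an initial object is an isomorphism), and let F : C ⥤ D be left adjoint to G : D ⥤ C. Then G.obj (⊥_D) is an initial object of C if and only if F reflects initial objects, i.e., for every object A of C, if F.obj A is initial in D then A is initial in C. -/
open CategoryTheory CategoryTheory.Limits

namespace CategoryTheory.Adjunction

variable {C D : Type*} [Category C] [Category D] {F : C ⥤ D} {G : D ⥤ C}

noncomputable def isInitialOfIsInitialLeftObj [HasStrictInitialObjects C] (adj : F ⊣ G)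
    {I : D} (hGI : IsInitial (G.obj I)) {A : C} (hFA : IsInitial (F.obj A)) : IsInitial A :=
  hGI.ofStrict (adj.homEquiv A I (hFA.to I))

noncomputable def isInitialLeftObjRightObj [HasStrictInitialObjects D] (adj : F ⊣ G)
    {I : D} (hI : IsInitial I) : IsInitial (F.obj (G.obj I)) :=
  hI.ofStrict (adj.counit.app I)

end CategoryTheory.Adjunction

theorem stmt_6_general {C D : Type*} [Category C] [Category D]
    [HasInitial D]
    [HasStrictInitialObjects C] [HasStrictInitialObjects D]
    (F : C ⥤ D) (G : D ⥤ C) (adj : F ⊣ G) :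
    Nonempty (IsInitial (G.obj (⊥_ D))) ↔
      ∀ A : C, Nonempty (IsInitial (F.obj A)) → Nonempty (IsInitial A) :=
  ⟨fun ⟨hG⟩ _ ⟨hFA⟩ => ⟨adj.isInitialOfIsInitialLeftObj hG hFA⟩,
    fun reflects => reflects _ ⟨adj.isInitialLeftObjRightObj initialIsInitial⟩⟩

/-- Let `F ⊣ G` be an adjunction between categories with strict initial
objects. Then `G.obj (⊥_ D)` is initial (i.e. the right adjoint preserves the initial
object) iff `F` reflects initial objects. -/
theorem stmt_6 {C D : Type*} [Category C] [Category D]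
    [HasInitial C] [HasInitial D]
    [HasStrictInitialObjects C] [HasStrictInitialObjects D]
    (F : C ⥤ D) (G : D ⥤ C) (adj : F ⊣ G) :
    Nonempty (IsInitial (G.obj (⊥_ D))) ↔
      ∀ A : C, Nonempty (IsInitial (F.obj A)) → Nonempty (IsInitial A) :=
  stmt_6_general F G adj
end

section
/- Let A, B, C, D be bounded distributive lattices in a common universe and let f : C → A, g : C → B, u : A → D, v : B → D be bounded lattice homomorphisms with v (g c) ≤ u (f c) for all c ∈ C. Suppose the square is a cocomma square: for every bounded distributive lattice E in the same universe and all bounded lattice homomorphisms p : A → E, q : B → E with q (g c) ≤ p (f c) for all c ∈ C, there exists a unique bounded lattice homomorphism h : D → E with h ∘ u = p and h ∘ v = q. Then the square has interpolation: for all a ∈ A and b ∈ B with v b ≤ u a, there exists c ∈ C with b ≤ g c and f c ≤ a. -/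
/-!
If `a` and `b` had no interpolant, two prime-ideal separations (first in `A`, then in `B`) would
give prime ideals `J ∋ a` of `A` and `K ∌ b` of `B` with `f⁻¹ J ⊆ g⁻¹ K`. The indicators
`x ↦ x ∉ J` and `y ↦ y ∉ K` into the two-element lattice then form a lax square under `f` and `g`,
and the map `D → Prop` it induces would turn `v b ≤ u a` into `b ∉ K → a ∉ J`, which is false.
-/

universe u

namespace Order.Ideal

variable {α β : Type*}

def map [Preorder α] [Preorder β] (f : α →o β) (I : Ideal α) : Ideal β where
  carrier := {y | ∃ x ∈ I, y ≤ f x}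
  lower' := fun _ _ hzy ⟨x, hx, hyx⟩ => ⟨x, hx, hzy.trans hyx⟩
  nonempty' := let ⟨x, hx⟩ := I.nonempty; ⟨f x, x, hx, le_rfl⟩
  directed' := by
    rintro y₁ ⟨x₁, hx₁, hy₁⟩ y₂ ⟨x₂, hx₂, hy₂⟩
    obtain ⟨x, hx, hx₁x, hx₂x⟩ := I.directed x₁ hx₁ x₂ hx₂
    exact ⟨f x, ⟨x, hx, le_rfl⟩, hy₁.trans (f.mono hx₁x), hy₂.trans (f.mono hx₂x)⟩

@[simp]
theorem mem_map [Preorder α] [Preorder β] {f : α →o β} {I : Ideal α} {y : β} :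
    y ∈ I.map f ↔ ∃ x ∈ I, y ≤ f x :=
  Iff.rfl

def comap [SemilatticeSup α] [OrderBot α] [SemilatticeSup β] [OrderBot β]
    (f : SupBotHom α β) (I : Ideal β) : Ideal α where
  carrier := f ⁻¹' I
  lower' := fun _ _ hyx hx => I.lower (OrderHomClass.mono f hyx) hx
  nonempty' := ⟨⊥, show f ⊥ ∈ I by rw [map_bot]; exact I.bot_mem⟩
  directed' := fun x hx y hy =>
    ⟨x ⊔ y, show f (x ⊔ y) ∈ I by rw [map_sup]; exact I.sup_mem hx hy, le_sup_left, le_sup_right⟩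

@[simp]
theorem mem_comap [SemilatticeSup α] [OrderBot α] [SemilatticeSup β] [OrderBot β]
    {f : SupBotHom α β} {I : Ideal β} {x : α} : x ∈ I.comap f ↔ f x ∈ I :=
  Iff.rfl

def IsPrime.notMemHom [Lattice α] [BoundedOrder α] {J : Ideal α} (hJ : J.IsPrime) :
    BoundedLatticeHom α Prop where
  toFun x := x ∉ J
  map_sup' x y := propext <| by simp only [sup_mem_iff, not_and_or]; rfl
  map_inf' x y := propext
    ⟨fun h => ⟨fun hx => h (J.lower inf_le_left hx), fun hy => h (J.lower inf_le_right hy)⟩,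
      fun ⟨hx, hy⟩ h => (hJ.mem_or_mem h).elim hx hy⟩
  map_top' := propext <| iff_true_intro hJ.top_notMem
  map_bot' := propext <| iff_false_intro (not_not_intro J.bot_mem)

end Order.Ideal

namespace Order.PFilter

variable {α β : Type*}

def map [Preorder α] [Preorder β] (f : α →o β) (F : PFilter α) : PFilter β :=
  ⟨F.dual.map f.dual⟩

@[simp]
theorem mem_map [Preorder α] [Preorder β] {f : α →o β} {F : PFilter α} {y : β} :
    y ∈ F.map f ↔ ∃ x ∈ F, f x ≤ y :=
  Iff.rfl

def comap [SemilatticeInf α] [OrderTop α] [SemilatticeInf β] [OrderTop β]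
    (f : InfTopHom α β) (F : PFilter β) : PFilter α :=
  ⟨F.dual.comap f.dual⟩

@[simp]
theorem mem_comap [SemilatticeInf α] [OrderTop α] [SemilatticeInf β] [OrderTop β]
    {f : InfTopHom α β} {F : PFilter β} {x : α} : x ∈ F.comap f ↔ f x ∈ F :=
  Iff.rfl

end Order.PFilter

theorem exists_isPrime_of_no_interpolant {A B C : Type*} [DistribLattice A] [BoundedOrder A]
    [DistribLattice B] [BoundedOrder B] [Lattice C] [BoundedOrder C]
    (f : SupBotHom C A) (g : InfTopHom C B) {a : A} {b : B}
    (hab : ¬∃ c, b ≤ g c ∧ f c ≤ a) :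
    ∃ J : Order.Ideal A, ∃ K : Order.Ideal B, J.IsPrime ∧ K.IsPrime ∧ a ∈ J ∧ b ∉ K ∧
      ∀ c, f c ∈ J → g c ∈ K := by
  set F := ((Order.PFilter.principal b).comap g).map (f : C →o A)
  have hFa : Disjoint (F : Set A) (Order.Ideal.principal a) := by
    refine Set.disjoint_left.2 fun x hxF hxa => ?_
    obtain ⟨c, hcb, hcx⟩ := Order.PFilter.mem_map.1 hxF
    exact hab ⟨c, Order.PFilter.mem_comap.1 hcb, hcx.trans hxa⟩
  obtain ⟨J, hJ, haJ, hFJ⟩ := DistribLattice.prime_ideal_of_disjoint_filter_ideal hFa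
  set I := (J.comap f).map (g : C →o B)
  have hbI : Disjoint (Order.PFilter.principal b : Set B) I := by
    refine Set.disjoint_left.2 fun y hby hyI => ?_
    obtain ⟨c, hcJ, hyc⟩ := Order.Ideal.mem_map.1 hyI
    have hfcF : f c ∈ F :=
      Order.PFilter.mem_map.2 ⟨c, Order.PFilter.mem_comap.2 (hby.trans hyc), le_rfl⟩
    exact Set.disjoint_left.1 hFJ hfcF (Order.Ideal.mem_comap.1 hcJ)
  obtain ⟨K, hK, hIK, hbK⟩ := DistribLattice.prime_ideal_of_disjoint_filter_ideal hbI
  exact ⟨J, K, hJ, hK, haJ Order.Ideal.mem_principal_self, Set.disjoint_left.1 hbK le_rfl,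
    fun c hc => hIK (Order.Ideal.mem_map.2 ⟨c, Order.Ideal.mem_comap.2 hc, le_rfl⟩)⟩

theorem stmt_8_general {A B C D : Type u}
    [DistribLattice A] [BoundedOrder A] [DistribLattice B] [BoundedOrder B]
    [DistribLattice C] [BoundedOrder C] [DistribLattice D] [BoundedOrder D]
    (f : BoundedLatticeHom C A) (g : BoundedLatticeHom C B)
    (u : BoundedLatticeHom A D) (v : BoundedLatticeHom B D)
    (cocomma : ∀ (E : Type u) [DistribLattice E] [BoundedOrder E]
      (p : BoundedLatticeHom A E) (q : BoundedLatticeHom B E),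
      (∀ c : C, q (g c) ≤ p (f c)) →
      ∃! h : BoundedLatticeHom D E, h.comp u = p ∧ h.comp v = q) :
    ∀ (a : A) (b : B), v b ≤ u a → ∃ c : C, b ≤ g c ∧ f c ≤ a := by
  intro a b hba
  by_contra hab
  obtain ⟨J, K, hJ, hK, haJ, hbK, hfg⟩ :=
    exists_isPrime_of_no_interpolant (f : SupBotHom C A) (g : InfTopHom C B) hab
  let up : BoundedLatticeHom Prop (ULift.{u} Prop) := (ULift.orderIso.symm : Prop ≃o ULift.{u} Prop)
  obtain ⟨h, ⟨hu, hv⟩, -⟩ := cocomma _ (up.comp hJ.notMemHom) (up.comp hK.notMemHom)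
    fun c hgc hfc => hgc (hfg c hfc)
  have hle : h.comp v b ≤ h.comp u a := OrderHomClass.mono h hba
  rw [hu, hv] at hle
  exact hle hbK haJ

/-- A cocomma square of bounded distributive lattices has interpolation. -/
theorem stmt_8 {A B C D : Type u}
    [DistribLattice A] [BoundedOrder A] [DistribLattice B] [BoundedOrder B]
    [DistribLattice C] [BoundedOrder C] [DistribLattice D] [BoundedOrder D]
    (f : BoundedLatticeHom C A) (g : BoundedLatticeHom C B)
    (u : BoundedLatticeHom A D) (v : BoundedLatticeHom B D)
    (lax : ∀ c : C, v (g c) ≤ u (f c))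
    (cocomma : ∀ (E : Type u) [DistribLattice E] [BoundedOrder E]
      (p : BoundedLatticeHom A E) (q : BoundedLatticeHom B E),
      (∀ c : C, q (g c) ≤ p (f c)) →
      ∃! h : BoundedLatticeHom D E, h.comp u = p ∧ h.comp v = q) :
    ∀ (a : A) (b : B), v b ≤ u a → ∃ c : C, b ≤ g c ∧ f c ≤ a :=
  stmt_8_general f g u v cocomma
end

section
/- Let C, E, E′ be categories with finite limits, let a be an object of C, let H : E ⥤ E′ be a fully faithful functor preserving finite limits, let F : C ⥤ E be a functor preserving finite limits, and let K : Over a ⥤ E′ be a functor preserving finite limits together with a natural isomorphism Over.star a ⋙ K ≅ F ⋙ H. Then there exists a functor G : Over a ⥤ E preserving finite limits together with a natural isomorphism G ⋙ H ≅ K. -/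
/-!
`Over a` is equivalent to the category of coalgebras of the comonad `a ⨯ -` on `C`, and under this
equivalence `Over.star a` is the cofree-coalgebra functor. Every coalgebra is an equalizer of cofree
ones (Beck), so every `K.obj p` is an equalizer of objects `K.obj ((Over.star a).obj b)`, which `ψ`
puts in the essential image of `H`. That image is closed under equalizers because `H` is fully
faithful and preserves them, so `K` lifts along `H`; the lift is lex because `H` reflects limits.
-/

open CategoryTheory CategoryTheory.Limits

namespace CategoryTheory

lemma Comonad.prop_obj_of_prop_cofree {C D : Type*} [Category C] [Category D] {T : Comonad C}
    (L : Comonad.Coalgebra T ⥤ D) [PreservesLimitsOfShape WalkingParallelPair L]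
    (P : ObjectProperty D) [P.IsClosedUnderLimitsOfShape WalkingParallelPair]
    (hP : ∀ c, P (L.obj ((cofree T).obj c))) (X : Comonad.Coalgebra T) : P (L.obj X) :=
  P.prop_of_isLimit (isLimitOfPreserves L (beckCoalgebraEqualizer X))
    (by rintro (_ | _) <;> apply hP)

lemma Over.prop_obj_of_prop_star {C D : Type*} [Category C] [Category D] [HasBinaryProducts C]
    {a : C} (K : Over a ⥤ D) [PreservesLimitsOfShape WalkingParallelPair K]
    (P : ObjectProperty D) [P.IsClosedUnderLimitsOfShape WalkingParallelPair]
    [P.IsClosedUnderIsomorphisms] (hP : ∀ b, P (K.obj ((star a).obj b))) (p : Over a) :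
    P (K.obj p) :=
  P.prop_of_iso (K.mapIso ((coalgebraEquivOver a).counitIso.app p))
    (Comonad.prop_obj_of_prop_cofree ((coalgebraEquivOver a).functor ⋙ K) P hP _)

lemma Functor.exists_preservesFiniteLimits_comp_iso_of_essImage {J E E' : Type*} [Category J]
    [Category E] [Category E'] (H : E ⥤ E') [H.Full] [H.Faithful]
    (K : J ⥤ E') [PreservesFiniteLimits K] (hK : ∀ j, H.essImage (K.obj j)) :
    ∃ (G : J ⥤ E) (_ : PreservesFiniteLimits G), Nonempty (G ⋙ H ≅ K) := by
  let e := essImage.liftFunctorCompIso K H hK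
  have := preservesFiniteLimits_of_natIso e.symm
  exact ⟨_, preservesFiniteLimits_of_reflects_of_preserves _ H, ⟨e⟩⟩

end CategoryTheory

theorem stmt_9_general {C : Type*} [Category C] {E : Type*} [Category E] {E' : Type*} [Category E']
    [HasFiniteLimits C] [HasFiniteLimits E]
    (a : C) (H : E ⥤ E') [H.Full] [H.Faithful] [PreservesFiniteLimits H]
    (F : C ⥤ E)
    (K : Over a ⥤ E') [PreservesFiniteLimits K]
    (ψ : Over.star a ⋙ K ≅ F ⋙ H) :
    ∃ (G : Over a ⥤ E) (_ : PreservesFiniteLimits G), Nonempty (G ⋙ H ≅ K) :=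
  H.exists_preservesFiniteLimits_comp_iso_of_essImage K
    (Over.prop_obj_of_prop_star K H.essImage fun b => ⟨F.obj b, ⟨(ψ.app b).symm⟩⟩)

/-- The slicing functor `Over.star a : C ⥤ Over a` is left orthogonal to
fully faithful finite-limit preserving functors: if `H : E ⥤ E'` is fully faithful and lex,
`F : C ⥤ E` is lex, and `K : Over a ⥤ E'` is lex with `Over.star a ⋙ K ≅ F ⋙ H`, then `K`
factors through `H` via a lex functor `G : Over a ⥤ E`. -/
theorem stmt_9 {C : Type*} [Category C] {E : Type*} [Category E] {E' : Type*} [Category E']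
    [HasFiniteLimits C] [HasFiniteLimits E] [HasFiniteLimits E']
    (a : C) (H : E ⥤ E') [H.Full] [H.Faithful] [PreservesFiniteLimits H]
    (F : C ⥤ E) [PreservesFiniteLimits F]
    (K : Over a ⥤ E') [PreservesFiniteLimits K]
    (ψ : Over.star a ⋙ K ≅ F ⋙ H) :
    ∃ (G : Over a ⥤ E) (_ : PreservesFiniteLimits G), Nonempty (G ⋙ H ≅ K) :=
  stmt_9_general a H F K ψ
end

section
/- Let f : A → B be a bounded lattice homomorphism between bounded distributive lattices and let a ∈ A. Equip Set.Iic a and Set.Iic (f a) with their induced bounded distributive lattice structures (with tops a and f a respectively), let σ_a : A → Set.Iic a and σ_{f a} : B → Set.Iic (f a) be the maps x ↦ x ⊓ a and y ↦ y ⊓ f a, and let f̄ : Set.Iic a → Set.Iic (f a) be ⟨x, hx⟩ ↦ ⟨f x, f-monotonicity⟩. Then f̄ is a bounded lattice homomorphism, f̄ ∘ σ_a = σ_{f a} ∘ f, and the square is a pushout: for every bounded distributive lattice E and all bounded lattice homomorphisms p : Set.Iic a → E and q : B → E with p ∘ σ_a = q ∘ f, there exists a unique bounded lattice homomorphism h :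 Set.Iic (f a) → E with h ∘ σ_{f a} = q and h ∘ f̄ = p. -/
/-!
The corestriction `σ_b : B → Set.Iic b` is surjective (it fixes every `y ≤ b`), so a map out of
`Set.Iic (f a)` is determined by its composite with `σ_{f a}`, which gives uniqueness. For
existence, the compatibility `p ∘ σ_a = q ∘ f` evaluated at `a` gives `q (f a) = p ⊤ = ⊤`; hence
`q (y ⊓ f a) = q y`, and the restriction of `q` to `Set.Iic (f a)` is the required map.
-/

universe u

variable {A : Type u} [DistribLattice A] [BoundedOrder A]
variable {B : Type u} [DistribLattice B] [BoundedOrder B]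

/-- The induced distributive lattice structure on `Set.Iic a` (its lattice operations are
those of `A`, its bottom is `⟨⊥, bot_le⟩` and its top is `⟨a, le_rfl⟩`). -/
instance Set.Iic.instDistribLattice (a : A) : DistribLattice (Set.Iic a) :=
  Subtype.coe_injective.distribLattice _ Iff.rfl Iff.rfl (fun _ _ => rfl) (fun _ _ => rfl)

/-- The bounded lattice homomorphism `σ_a : A → Set.Iic a`, `x ↦ ⟨x ⊓ a, inf_le_right⟩`. -/
def sigmaHom (a : A) : BoundedLatticeHom A (Set.Iic a) where
  toFun x := ⟨x ⊓ a, inf_le_right⟩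
  map_sup' x y := Subtype.ext (by simp [inf_sup_right])
  map_inf' x y := Subtype.ext (by
    change (x ⊓ y) ⊓ a = (x ⊓ a) ⊓ (y ⊓ a)
    rw [inf_inf_distrib_right])
  map_top' := Subtype.ext (by simp)
  map_bot' := Subtype.ext (by simp)

/-- The sliced bounded lattice homomorphism `f̄ : Set.Iic a → Set.Iic (f a)`,
`⟨x, hx⟩ ↦ ⟨f x, _⟩`, induced by a bounded lattice homomorphism `f : A → B`. -/
def sliceHom (f : BoundedLatticeHom A B) (a : A) :
    BoundedLatticeHom (Set.Iic a) (Set.Iic (f a)) where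
  toFun x := ⟨f x.1, OrderHomClass.mono f x.2⟩
  map_sup' x y := Subtype.ext (by simp)
  map_inf' x y := Subtype.ext (by simp)
  map_top' := Subtype.ext (by simp [Set.Iic.coe_top])
  map_bot' := Subtype.ext (by simp)

lemma sigmaHom_of_mem (a : A) (x : Set.Iic a) : sigmaHom a x = x :=
  Subtype.ext (inf_eq_left.mpr x.2)

lemma sigmaHom_self (a : A) : sigmaHom a a = ⊤ :=
  Subtype.ext (inf_idem a)

lemma sigmaHom_surjective (a : A) : Function.Surjective (sigmaHom a) :=
  fun x => ⟨x, sigmaHom_of_mem a x⟩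

lemma sliceHom_comp_sigmaHom (f : BoundedLatticeHom A B) (a : A) :
    (sliceHom f a).comp (sigmaHom a) = (sigmaHom (f a)).comp f :=
  BoundedLatticeHom.ext fun x => Subtype.ext (map_inf f x a)

def BoundedLatticeHom.restrictIic {E : Type*} [Lattice E] [BoundedOrder E]
    (q : BoundedLatticeHom B E) (b : B) (hb : q b = ⊤) : BoundedLatticeHom (Set.Iic b) E where
  toFun y := q y
  map_sup' _ _ := map_sup q _ _
  map_inf' _ _ := map_inf q _ _
  map_top' := hb
  map_bot' := map_bot q

lemma BoundedLatticeHom.restrictIic_comp_sigmaHom {E : Type*} [Lattice E] [BoundedOrder E]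
    (q : BoundedLatticeHom B E) (b : B) (hb : q b = ⊤) :
    (q.restrictIic b hb).comp (sigmaHom b) = q :=
  BoundedLatticeHom.ext fun y => by
    change q (y ⊓ b) = q y
    rw [map_inf, hb, inf_top_eq]

/-- For a bounded lattice homomorphism `f : A → B` between bounded
distributive lattices and `a ∈ A`, the square formed by `σ_a`, `σ_{f a}`, `f` and
`f̄ : Set.Iic a → Set.Iic (f a)` commutes and is a pushout of bounded distributive
lattices: slicing squares are pushouts, posetally. -/
theorem stmt_13 (f : BoundedLatticeHom A B) (a : A) :
    (sliceHom f a).comp (sigmaHom a) = (sigmaHom (f a)).comp f ∧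
      ∀ (E : Type u) [DistribLattice E] [BoundedOrder E]
        (p : BoundedLatticeHom (Set.Iic a) E) (q : BoundedLatticeHom B E),
        p.comp (sigmaHom a) = q.comp f →
        ∃! h : BoundedLatticeHom (Set.Iic (f a)) E,
          h.comp (sigmaHom (f a)) = q ∧ h.comp (sliceHom f a) = p := by
  refine ⟨sliceHom_comp_sigmaHom f a, fun E _ _ p q hpq => ?_⟩
  have hpq_apply (x : A) : p (sigmaHom a x) = q (f x) := DFunLike.congr_fun hpq x
  have hq_top : q (f a) = ⊤ := by rw [← hpq_apply, sigmaHom_self, map_top]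
  refine ⟨q.restrictIic (f a) hq_top, ⟨q.restrictIic_comp_sigmaHom _ hq_top, ?_⟩, ?_⟩
  · refine BoundedLatticeHom.ext fun x => ?_
    change q (f x) = p x
    rw [← hpq_apply, sigmaHom_of_mem]
  · rintro h ⟨hh, -⟩
    rw [← BoundedLatticeHom.cancel_right (sigmaHom_surjective (f a)), hh,
      q.restrictIic_comp_sigmaHom]
end
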